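/- arXiv:math/9808130 — 5 statements merged into one kernel-verified Lean document; each statement's English description precedes it below -/
import Mathlib

section
/- Let P, Q be modules over a commutative unital 𝕜-algebra A and k ≥ 0. For Δ ∈ Diff_k⁺(P,Q) and p ∈ P define ψ_Δ(p) : A → Q by ψ_Δ(p)(a) = Δ(a·p). Then ψ_Δ(p) ∈ Diff_k⁺(Q) for every p ∈ P, the map ψ_Δ : P → Diff_k⁺(Q) is A-linear, and the map ψ : Diff_k⁺(P,Q) → Hom_A(P, Diff_k⁺(Q)), Δ ↦ ψ_Δ, is an isomorphism of A-modules whose inverse sends φ ∈ Hom_A(P, Diff_k⁺(Q)) to the operator p ↦ (φ(p))(1). -/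
/-- `dop A a f = δ_a(f)`, where `δ_a(f)(p) = f (a • p) - a • f p`. -/
def dop (A : Type*) [CommRing A] {M N : Type*} [AddCommGroup M] [Module A M]
    [AddCommGroup N] [Module A N] (a : A) (f : M → N) : M → N :=
  fun p => f (a • p) - a • f p

/-- `IsDiffOp A k f` : `f` is a differential operator of order at most `k` over `A`. -/
def IsDiffOp (A : Type*) [CommRing A] {M N : Type*} [AddCommGroup M] [Module A M]
    [AddCommGroup N] [Module A N] : ℕ → (M → N) → Prop
  | 0, f => ∀ a : A, dop A a f = 0
  | k + 1, f => ∀ a : A, IsDiffOp A k (dop A a f)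

section
variable (𝕜 : Type*) [Field 𝕜] (A : Type*) [CommRing A] [Algebra 𝕜 A]
variable {P Q : Type*}
  [AddCommGroup P] [Module 𝕜 P] [Module A P] [IsScalarTower 𝕜 A P]
  [AddCommGroup Q] [Module 𝕜 Q] [Module A Q] [IsScalarTower 𝕜 A Q]

/-- `psi Δ p : A →ₗ[𝕜] Q`, `a ↦ Δ (a • p)`:  the `Diff`-associated homomorphism `ψ_Δ`. -/
def psi (Δ : P →ₗ[𝕜] Q) (p : P) : A →ₗ[𝕜] Q where
  toFun a := Δ (a • p)
  map_add' a b := by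
    show Δ ((a + b) • p) = Δ (a • p) + Δ (b • p)
    rw [add_smul, map_add]
  map_smul' c a := by
    show Δ ((c • a) • p) = c • Δ (a • p)
    rw [smul_assoc, map_smul]

/-- The `+`-action of `A` on `𝕜`-linear maps `P → Q`: `(a⁺Δ)(p) = Δ (a • p)`. -/
def plusAct (a : A) (Δ : P →ₗ[𝕜] Q) : P →ₗ[𝕜] Q where
  toFun p := Δ (a • p)
  map_add' p p' := by
    show Δ (a • (p + p')) = Δ (a • p) + Δ (a • p')
    rw [smul_add, map_add]
  map_smul' c p := by
    show Δ (a • c • p) = c • Δ (a • p)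
    rw [(smul_comm c a p).symm, map_smul]

end


/-!
The whole argument rests on the identity `δ_a(b ↦ g(b • p)) = b ↦ δ_a(g)(b • p)`: pulling a map
`g : P → Q` back along `b ↦ b • p` commutes with every `δ_a`. Since `g p` is recovered by
evaluating the pull-back at `b = 1`, it follows by induction on `k` that `g` has order `≤ k`
iff all its pull-backs do. This gives both that `ψ_Δ` lands in `Diff_k⁺(Q)` and that
`p ↦ φ(p)(1)` is a differential operator, whose `ψ` is `φ` by `A`-linearity of `φ`.
-/

section PullBack

variable {A : Type*} [CommRing A] {P Q : Type*}
  [AddCommGroup P] [Module A P] [AddCommGroup Q]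

theorem eq_zero_iff_forall_comp_smul_right (g : P → Q) :
    g = 0 ↔ ∀ p, (fun b : A => g (b • p)) = 0 := by
  refine ⟨fun h p => by subst h; rfl, fun h => funext fun p => ?_⟩
  simpa using congrFun (h p) 1

variable [Module A Q]

theorem dop_comp_smul_right (a : A) (g : P → Q) (p : P) :
    dop A a (fun b : A => g (b • p)) = fun b => dop A a g (b • p) := by
  funext b
  simp only [dop, smul_eq_mul, mul_smul]

theorem isDiffOp_iff_forall_comp_smul_right {k : ℕ} {g : P → Q} :
    IsDiffOp A k g ↔ ∀ p, IsDiffOp A k (fun b : A => g (b • p)) := by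
  induction k generalizing g with
  | zero =>
    simp only [IsDiffOp, dop_comp_smul_right]
    rw [forall_comm]
    exact forall_congr' fun a => eq_zero_iff_forall_comp_smul_right _
  | succ k ih =>
    simp only [IsDiffOp, ih, dop_comp_smul_right]
    exact forall_comm

end PullBack

section Psi

variable {𝕜 : Type*} [Field 𝕜] {A : Type*} [CommRing A] [Algebra 𝕜 A] {P Q : Type*}
  [AddCommGroup P] [Module 𝕜 P] [Module A P] [IsScalarTower 𝕜 A P]
  [AddCommGroup Q] [Module 𝕜 Q]

@[simp]
theorem psi_apply (Δ : P →ₗ[𝕜] Q) (p : P) (b : A) : psi 𝕜 A Δ p b = Δ (b • p) := rfl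

theorem psi_apply_one (Δ : P →ₗ[𝕜] Q) (p : P) : psi 𝕜 A Δ p 1 = Δ p := by
  simp

theorem psi_map_add (Δ : P →ₗ[𝕜] Q) (p p' : P) :
    psi 𝕜 A Δ (p + p') = psi 𝕜 A Δ p + psi 𝕜 A Δ p' := by
  ext b
  simp

theorem psi_map_smul_apply (Δ : P →ₗ[𝕜] Q) (a : A) (p : P) (b : A) :
    psi 𝕜 A Δ (a • p) b = psi 𝕜 A Δ p (a * b) := by
  simp [smul_smul, mul_comm]

theorem psi_add (Δ Δ' : P →ₗ[𝕜] Q) : psi 𝕜 A (Δ + Δ') = psi 𝕜 A Δ + psi 𝕜 A Δ' := by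
  funext p
  ext b
  simp

theorem psi_plusAct_apply (a : A) (Δ : P →ₗ[𝕜] Q) (p : P) (b : A) :
    psi 𝕜 A (plusAct 𝕜 A a Δ) p b = psi 𝕜 A Δ p (a * b) := by
  simp [plusAct, smul_smul]

theorem psi_injective : Function.Injective (psi 𝕜 A : (P →ₗ[𝕜] Q) → P → A →ₗ[𝕜] Q) :=
  fun Δ Δ' h => LinearMap.ext fun p => by
    rw [← psi_apply_one (A := A) Δ, ← psi_apply_one (A := A) Δ', h]

def psiInv (φ : P → A →ₗ[𝕜] Q) (hadd : ∀ p p', φ (p + p') = φ p + φ p')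
    (hsmul : ∀ (a : A) p b, φ (a • p) b = φ p (a * b)) : P →ₗ[𝕜] Q where
  toFun p := φ p 1
  map_add' p p' := by simp [hadd]
  map_smul' c p := by
    rw [← algebraMap_smul A c p, hsmul, mul_one, Algebra.algebraMap_eq_smul_one, map_smul]
    rfl

variable {φ : P → A →ₗ[𝕜] Q} {hadd : ∀ p p', φ (p + p') = φ p + φ p'}
  {hsmul : ∀ (a : A) p b, φ (a • p) b = φ p (a * b)}

theorem psiInv_apply (p : P) : psiInv φ hadd hsmul p = φ p 1 := rfl

theorem psi_psiInv : psi 𝕜 A (psiInv φ hadd hsmul) = φ := by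
  funext p
  ext b
  simp [psiInv_apply, hsmul]

theorem isDiffOp_psiInv [Module A Q] {k : ℕ} (hφ : ∀ p, IsDiffOp A k ⇑(φ p)) :
    IsDiffOp A k ⇑(psiInv φ hadd hsmul) :=
  isDiffOp_iff_forall_comp_smul_right.2 fun p => by
    simpa only [← psi_apply, psi_psiInv] using hφ p

end Psi

theorem diff_plus_representability_general
    (𝕜 : Type*) [Field 𝕜] (A : Type*) [CommRing A] [Algebra 𝕜 A]
    (P Q : Type*)
    [AddCommGroup P] [Module 𝕜 P] [Module A P] [IsScalarTower 𝕜 A P]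
    [AddCommGroup Q] [Module 𝕜 Q] [Module A Q]
    (k : ℕ) :
    -- ψ_Δ takes values in Diff_k⁺(Q)
    (∀ Δ : P →ₗ[𝕜] Q, IsDiffOp A k ⇑Δ → ∀ p : P, IsDiffOp A k ⇑(psi 𝕜 A Δ p)) ∧
    -- ψ_Δ : P → Diff_k⁺(Q) is A-linear (w.r.t. the `+`-module structure on the target)
    (∀ Δ : P →ₗ[𝕜] Q, IsDiffOp A k ⇑Δ →
      (∀ p p' : P, psi 𝕜 A Δ (p + p') = psi 𝕜 A Δ p + psi 𝕜 A Δ p') ∧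
      (∀ (a : A) (p : P) (b : A), psi 𝕜 A Δ (a • p) b = psi 𝕜 A Δ p (a * b))) ∧
    -- ψ is additive and A-homogeneous (for the `+`-actions), i.e. a map of A-modules
    (∀ Δ Δ' : P →ₗ[𝕜] Q, IsDiffOp A k ⇑Δ → IsDiffOp A k ⇑Δ' →
      psi 𝕜 A (Δ + Δ') = psi 𝕜 A Δ + psi 𝕜 A Δ') ∧
    (∀ (a : A) (Δ : P →ₗ[𝕜] Q), IsDiffOp A k ⇑Δ →
      ∀ (p : P) (b : A), psi 𝕜 A (plusAct 𝕜 A a Δ) p b = psi 𝕜 A Δ p (a * b)) ∧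
    -- the inverse sends φ to p ↦ φ(p)(1)
    (∀ (Δ : P →ₗ[𝕜] Q) (p : P), psi 𝕜 A Δ p 1 = Δ p) ∧
    -- ψ is injective …
    (∀ Δ Δ' : P →ₗ[𝕜] Q, IsDiffOp A k ⇑Δ → IsDiffOp A k ⇑Δ' →
      psi 𝕜 A Δ = psi 𝕜 A Δ' → Δ = Δ') ∧
    -- … and surjective onto Hom_A(P, Diff_k⁺(Q))
    (∀ φ : P → (A →ₗ[𝕜] Q),
      (∀ p p' : P, φ (p + p') = φ p + φ p') →
      (∀ (a : A) (p : P) (b : A), φ (a • p) b = φ p (a * b)) →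
      (∀ p : P, IsDiffOp A k ⇑(φ p)) →
      ∃ Δ : P →ₗ[𝕜] Q, IsDiffOp A k ⇑Δ ∧ (∀ p : P, Δ p = φ p 1) ∧ psi 𝕜 A Δ = φ) :=
  ⟨fun _ hΔ => isDiffOp_iff_forall_comp_smul_right.1 hΔ,
    fun Δ _ => ⟨psi_map_add Δ, psi_map_smul_apply Δ⟩,
    fun Δ Δ' _ _ => psi_add Δ Δ',
    fun a Δ _ => psi_plusAct_apply a Δ,
    psi_apply_one,
    fun _ _ _ _ h => psi_injective h,
    fun _ hadd hsmul hφ =>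
      ⟨psiInv _ hadd hsmul, isDiffOp_psiInv hφ, psiInv_apply, psi_psiInv⟩⟩

/-- For `Δ ∈ Diff_k⁺(P,Q)` set `ψ_Δ(p)(a) = Δ(a • p)`.  Then
`ψ_Δ(p) ∈ Diff_k⁺(Q)`, the map `ψ_Δ : P → Diff_k⁺(Q)` is `A`-linear (for the `+`-module
structure on `Diff_k⁺(Q)`, `(a⁺θ)(b) = θ(a b)`), and `Δ ↦ ψ_Δ` is an isomorphism of
`A`-modules `Diff_k⁺(P,Q) ≃ Hom_A(P, Diff_k⁺(Q))` (for the `+`-structures) whose inverse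
sends `φ` to `p ↦ φ(p)(1)`. -/
theorem diff_plus_representability
    (𝕜 : Type*) [Field 𝕜] (A : Type*) [CommRing A] [Algebra 𝕜 A]
    (P Q : Type*)
    [AddCommGroup P] [Module 𝕜 P] [Module A P] [IsScalarTower 𝕜 A P]
    [AddCommGroup Q] [Module 𝕜 Q] [Module A Q] [IsScalarTower 𝕜 A Q]
    (k : ℕ) :
    -- ψ_Δ takes values in Diff_k⁺(Q)
    (∀ Δ : P →ₗ[𝕜] Q, IsDiffOp A k ⇑Δ → ∀ p : P, IsDiffOp A k ⇑(psi 𝕜 A Δ p)) ∧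
    -- ψ_Δ : P → Diff_k⁺(Q) is A-linear (w.r.t. the `+`-module structure on the target)
    (∀ Δ : P →ₗ[𝕜] Q, IsDiffOp A k ⇑Δ →
      (∀ p p' : P, psi 𝕜 A Δ (p + p') = psi 𝕜 A Δ p + psi 𝕜 A Δ p') ∧
      (∀ (a : A) (p : P) (b : A), psi 𝕜 A Δ (a • p) b = psi 𝕜 A Δ p (a * b))) ∧
    -- ψ is additive and A-homogeneous (for the `+`-actions), i.e. a map of A-modules
    (∀ Δ Δ' : P →ₗ[𝕜] Q, IsDiffOp A k ⇑Δ → IsDiffOp A k ⇑Δ' →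
      psi 𝕜 A (Δ + Δ') = psi 𝕜 A Δ + psi 𝕜 A Δ') ∧
    (∀ (a : A) (Δ : P →ₗ[𝕜] Q), IsDiffOp A k ⇑Δ →
      ∀ (p : P) (b : A), psi 𝕜 A (plusAct 𝕜 A a Δ) p b = psi 𝕜 A Δ p (a * b)) ∧
    -- the inverse sends φ to p ↦ φ(p)(1)
    (∀ (Δ : P →ₗ[𝕜] Q) (p : P), psi 𝕜 A Δ p 1 = Δ p) ∧
    -- ψ is injective …
    (∀ Δ Δ' : P →ₗ[𝕜] Q, IsDiffOp A k ⇑Δ → IsDiffOp A k ⇑Δ' →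
      psi 𝕜 A Δ = psi 𝕜 A Δ' → Δ = Δ') ∧
    -- … and surjective onto Hom_A(P, Diff_k⁺(Q))
    (∀ φ : P → (A →ₗ[𝕜] Q),
      (∀ p p' : P, φ (p + p') = φ p + φ p') →
      (∀ (a : A) (p : P) (b : A), φ (a • p) b = φ p (a * b)) →
      (∀ p : P, IsDiffOp A k ⇑(φ p)) →
      ∃ Δ : P →ₗ[𝕜] Q, IsDiffOp A k ⇑Δ ∧ (∀ p : P, Δ p = φ p 1) ∧ psi 𝕜 A Δ = φ) :=
  diff_plus_representability_general 𝕜 A P Q k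
end

section
/- Let P be a module over a commutative unital 𝕜-algebra A and k, l ≥ 0. Let Δ : A → Diff_l⁺(P) be a differential operator of order ≤ k over A with values in the A-module Diff_l⁺(P). Then the map c_{k,l}(Δ) : A → P defined by c_{k,l}(Δ)(a) = (Δ(a))(1) is a differential operator of order ≤ k + l over A, and the resulting gluing map c_{k,l} : Diff_k⁺(Diff_l⁺(P)) → Diff_{k+l}⁺(P) is a homomorphism of A-modules. -/
/-- The `𝕜`-linear maps `A → P`, regarded as an `A`-module via the action
`(a • θ) b = θ (a * b)`:  this is the carrier of the modules `Diff_l⁺(P)` with the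
`+`-module structure. -/
def PlusHom (𝕜 : Type*) [Field 𝕜] (A : Type*) [CommRing A] [Algebra 𝕜 A]
    (P : Type*) [AddCommGroup P] [Module 𝕜 P] : Type _ :=
  A →ₗ[𝕜] P

namespace PlusHom

variable {𝕜 : Type*} [Field 𝕜] {A : Type*} [CommRing A] [Algebra 𝕜 A]
variable {P : Type*} [AddCommGroup P] [Module 𝕜 P]

instance : FunLike (PlusHom 𝕜 A P) A P :=
  inferInstanceAs (FunLike (A →ₗ[𝕜] P) A P)

instance : AddCommGroup (PlusHom 𝕜 A P) :=
  inferInstanceAs (AddCommGroup (A →ₗ[𝕜] P))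

instance : Module 𝕜 (PlusHom 𝕜 A P) :=
  inferInstanceAs (Module 𝕜 (A →ₗ[𝕜] P))

instance : LinearMapClass (PlusHom 𝕜 A P) 𝕜 A P :=
  inferInstanceAs (LinearMapClass (A →ₗ[𝕜] P) 𝕜 A P)

/-- Regard a `𝕜`-linear map as an element of `PlusHom`. -/
def of (θ : A →ₗ[𝕜] P) : PlusHom 𝕜 A P := θ

/-- The underlying `𝕜`-linear map. -/
def toLin (θ : PlusHom 𝕜 A P) : A →ₗ[𝕜] P := θ

instance : SMul A (PlusHom 𝕜 A P) :=
  ⟨fun a θ => of (toLin θ ∘ₗ LinearMap.mulLeft 𝕜 a)⟩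

lemma ext {θ η : PlusHom 𝕜 A P} (h : ∀ b : A, θ b = η b) : θ = η :=
  LinearMap.ext h

@[simp] lemma smul_apply (a : A) (θ : PlusHom 𝕜 A P) (b : A) :
    (a • θ) b = θ (a * b) := rfl

@[simp] lemma add_apply (θ η : PlusHom 𝕜 A P) (b : A) : (θ + η) b = θ b + η b := rfl

@[simp] lemma ksmul_apply (c : 𝕜) (θ : PlusHom 𝕜 A P) (b : A) :
    (c • θ) b = c • θ b := rfl

@[simp] lemma zero_apply (b : A) : (0 : PlusHom 𝕜 A P) b = 0 := rfl

instance : Module A (PlusHom 𝕜 A P) where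
  smul := (· • ·)
  one_smul θ := ext fun b => congrArg θ (one_mul b)
  mul_smul a a' θ := ext fun b => congrArg θ (show (a * a') * b = a' * (a * b) by ring)
  smul_zero a := ext fun _ => rfl
  smul_add a θ η := ext fun _ => rfl
  add_smul a a' θ := ext fun b => by
    show θ ((a + a') * b) = θ (a * b) + θ (a' * b)
    rw [add_mul]; exact map_add θ _ _
  zero_smul θ := ext fun b => by
    show θ (0 * b) = 0
    rw [zero_mul]; exact map_zero θ

instance : IsScalarTower 𝕜 A (PlusHom 𝕜 A P) :=
  ⟨fun c a θ => ext fun b => by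
    show θ ((c • a) * b) = c • θ (a * b)
    rw [smul_mul_assoc, map_smul]⟩

end PlusHom

section
variable (𝕜 : Type*) [Field 𝕜] (A : Type*) [CommRing A] [Algebra 𝕜 A]
variable {P : Type*} [AddCommGroup P] [Module 𝕜 P]

/-- The gluing map `c_{k,l}` : it sends `Δ : A → Diff⁺(P)` to the operator
`a ↦ (Δ a)(1)`. -/
def glue (Δ : PlusHom 𝕜 A (PlusHom 𝕜 A P)) : PlusHom 𝕜 A P :=
  PlusHom.of
    { toFun := fun a => Δ a 1
      map_add' := fun a b => by
        show Δ (a + b) 1 = Δ a 1 + Δ b 1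
        rw [map_add]; rfl
      map_smul' := fun c a => by
        show Δ (c • a) 1 = c • Δ a 1
        rw [map_smul]; rfl }

end

/-! Write `g b = Δ b 1`. For every `a`, adding and subtracting `Δ b a` splits `δ_a g` as
`δ_a g b = (δ_a Δ) b 1 + δ_a (Δ b) 1`, a gluing of two operators each of which has lost one
order, either in the outer variable (`δ_a Δ`, of order `k - 1` with values of order `l`) or
in the inner one (`b ↦ δ_a (Δ b)`, of order `k` with values of order `l - 1`; the outer order
is kept because `δ_a` commutes with the `+`-action). Induction on `k + l` concludes; when an
order is already `0`, the corresponding summand vanishes. -/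

section IsDiffOp

variable {A : Type*} [CommRing A] {M N : Type*} [AddCommGroup M] [Module A M]
  [AddCommGroup N] [Module A N]

lemma dop_zero (a : A) : dop A a (0 : M → N) = 0 := by
  funext p
  simp [dop]

lemma dop_add (a : A) (f g : M → N) : dop A a (f + g) = dop A a f + dop A a g := by
  funext p
  simp only [dop, Pi.add_apply, smul_add]
  abel

lemma dop_comp_smul (a c : A) (f : M → N) :
    dop A c (fun p => f (a • p)) = fun p => dop A c f (a • p) := by
  funext p
  simp only [dop, smul_comm a c]

lemma dop_linearMap_comp {N' : Type*} [AddCommGroup N'] [Module A N'] (φ : N →ₗ[A] N')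
    (a : A) (f : M → N) : dop A a (φ ∘ f) = φ ∘ dop A a f := by
  funext p
  simp [dop]

lemma IsDiffOp.zero (k : ℕ) : IsDiffOp A k (0 : M → N) := by
  induction k with
  | zero => exact dop_zero
  | succ k ih => intro a; rwa [dop_zero]

lemma IsDiffOp.add {k : ℕ} {f g : M → N} (hf : IsDiffOp A k f) (hg : IsDiffOp A k g) :
    IsDiffOp A k (f + g) := by
  induction k generalizing f g with
  | zero => intro a; rw [dop_add, hf a, hg a, add_zero]
  | succ k ih => intro a; rw [dop_add]; exact ih (hf a) (hg a)

lemma IsDiffOp.comp_smul {k : ℕ} {f : M → N} (hf : IsDiffOp A k f) (a : A) :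
    IsDiffOp A k (fun p => f (a • p)) := by
  induction k generalizing f with
  | zero => intro c; rw [dop_comp_smul, hf c]; rfl
  | succ k ih => intro c; rw [dop_comp_smul]; exact ih (hf c)

lemma IsDiffOp.linearMap_comp {N' : Type*} [AddCommGroup N'] [Module A N'] {k : ℕ}
    {f : M → N} (hf : IsDiffOp A k f) (φ : N →ₗ[A] N') : IsDiffOp A k (φ ∘ f) := by
  induction k generalizing f with
  | zero => intro a; rw [dop_linearMap_comp, hf a]; exact funext fun _ => map_zero φ
  | succ k ih => intro a; rw [dop_linearMap_comp]; exact ih (hf a)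

end IsDiffOp

namespace PlusHom

variable (𝕜 : Type*) [Field 𝕜] (A : Type*) [CommRing A] [Algebra 𝕜 A]
  (P : Type*) [AddCommGroup P] [Module 𝕜 P] [Module A P]

/-- `Diff_l⁺(P)`. -/
def diff (l : ℕ) : Submodule A (PlusHom 𝕜 A P) where
  carrier := {θ | IsDiffOp A l ⇑θ}
  zero_mem' := IsDiffOp.zero l
  add_mem' := IsDiffOp.add
  smul_mem' a _ hθ := hθ.comp_smul a

variable {𝕜 A P}

lemma dop_apply_mem_diff {l : ℕ} {f : A → PlusHom 𝕜 A P} (hf : ∀ b, f b ∈ diff 𝕜 A P l)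
    (a b : A) : _root_.dop A a f b ∈ diff 𝕜 A P l :=
  sub_mem (hf (a • b)) (Submodule.smul_mem _ a (hf b))

variable [SMulCommClass 𝕜 A P]

def dop (a : A) : PlusHom 𝕜 A P →ₗ[A] PlusHom 𝕜 A P where
  toFun θ := of (toLin θ ∘ₗ LinearMap.mulLeft 𝕜 a - a • toLin θ)
  map_add' θ η := ext fun x => by
    change (θ + η) (a * x) - a • (θ + η) x = θ (a * x) - a • θ x + (η (a * x) - a • η x)
    simp only [add_apply, smul_add]
    abel
  map_smul' c θ := ext fun x => by
    change θ (c * (a * x)) - a • θ (c * x) = θ (a * (c * x)) - a • θ (c * x)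
    rw [mul_left_comm]

lemma dop_mem_diff {l : ℕ} {θ : PlusHom 𝕜 A P} (hθ : θ ∈ diff 𝕜 A P (l + 1)) (a : A) :
    dop a θ ∈ diff 𝕜 A P l :=
  hθ a

end PlusHom

section Glue

variable {𝕜 : Type*} [Field 𝕜] {A : Type*} [CommRing A] [Algebra 𝕜 A]
  {P : Type*} [AddCommGroup P] [Module 𝕜 P] [Module A P] [SMulCommClass 𝕜 A P]

lemma dop_eval_one (a : A) (f : A → PlusHom 𝕜 A P) :
    dop A a (fun b => f b 1) = fun b => dop A a f b 1 + PlusHom.dop a (f b) 1 := by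
  funext b
  change f (a * b) 1 - a • f b 1 = (f (a * b) 1 - f b (a * 1)) + (f b (a * 1) - a • f b 1)
  abel

theorem IsDiffOp.eval_one {k l : ℕ} {f : A → PlusHom 𝕜 A P} (hf : IsDiffOp A k f)
    (hfl : ∀ b, f b ∈ PlusHom.diff 𝕜 A P l) : IsDiffOp A (k + l) (fun b => f b 1) := by
  induction hn : k + l generalizing k l f with
  | zero =>
    obtain ⟨rfl, rfl⟩ : k = 0 ∧ l = 0 := by omega
    intro a
    rw [dop_eval_one, hf a]
    funext b
    exact (zero_add _).trans (congrFun (hfl b a) 1)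
  | succ n ih =>
    intro a
    rw [dop_eval_one]
    refine IsDiffOp.add ?outer ?inner
    case outer =>
      cases k with
      | zero => rw [hf a]; exact IsDiffOp.zero n
      | succ k => exact ih (hf a) (PlusHom.dop_apply_mem_diff hfl a) (by omega)
    case inner =>
      cases l with
      | zero =>
        convert IsDiffOp.zero (M := A) (N := P) n using 1
        funext b
        exact congrFun (hfl b a) 1
      | succ l =>
        exact ih (hf.linearMap_comp (PlusHom.dop a))
          (fun b => PlusHom.dop_mem_diff (hfl b) a) (by omega)

end Glue

/-- If `Δ : A → Diff_l⁺(P)` is a differential operator of order `≤ k`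
over `A` with values in the `A`-module `Diff_l⁺(P)` (with the `+`-structure
`(a • θ) b = θ (a b)`), then `c_{k,l}(Δ) : a ↦ (Δ a)(1)` is a differential operator of
order `≤ k + l` over `A`, and the gluing map `c_{k,l}` is a homomorphism of `A`-modules
(for the `+`-structures on both operator modules). -/
theorem glue_isDiffOp_and_linear
    (𝕜 : Type*) [Field 𝕜] (A : Type*) [CommRing A] [Algebra 𝕜 A]
    (P : Type*) [AddCommGroup P] [Module 𝕜 P] [Module A P] [IsScalarTower 𝕜 A P]
    (k l : ℕ) :
    (∀ Δ : PlusHom 𝕜 A (PlusHom 𝕜 A P), ∀ b : A, glue 𝕜 A Δ b = Δ b 1) ∧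
    (∀ Δ : PlusHom 𝕜 A (PlusHom 𝕜 A P),
      IsDiffOp A k ⇑Δ → (∀ a : A, IsDiffOp A l ⇑(Δ a)) →
        IsDiffOp A (k + l) ⇑(glue 𝕜 A Δ)) ∧
    (∀ Δ Δ' : PlusHom 𝕜 A (PlusHom 𝕜 A P),
      IsDiffOp A k ⇑Δ → (∀ a : A, IsDiffOp A l ⇑(Δ a)) →
      IsDiffOp A k ⇑Δ' → (∀ a : A, IsDiffOp A l ⇑(Δ' a)) →
        glue 𝕜 A (Δ + Δ') = glue 𝕜 A Δ + glue 𝕜 A Δ') ∧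
    (∀ (a : A) (Δ : PlusHom 𝕜 A (PlusHom 𝕜 A P)),
      IsDiffOp A k ⇑Δ → (∀ b : A, IsDiffOp A l ⇑(Δ b)) →
        glue 𝕜 A (a • Δ) = a • glue 𝕜 A Δ) :=
  ⟨fun _ _ => rfl,
    fun _ hk hl => hk.eval_one hl,
    fun _ _ _ _ _ _ => PlusHom.ext fun _ => rfl,
    fun _ _ _ _ => PlusHom.ext fun _ => rfl⟩
end

section
/- Let 𝕜 be a field of characteristic zero and A a commutative unital 𝕜-algebra whose module of Kähler differentials Ω_{A/𝕜} is finitely generated and projective (A is smooth), and let P be an A-module. For Δ ∈ Diff_k(A,P) define s_Δ : A^k → P by s_Δ(a₁,…,a_k) = (δ_{a₁}(δ_{a₂}(⋯δ_{a_k}(Δ)⋯)))(1). Then s_Δ is a symmetric k-multiderivation of A with values in P, the map Δ ↦ s_Δ is A-linear with kernel exactly Diff_{k−1}(A,P), and it maps Diff_k(A,P) surjectively onto the A-module of symmetric k-multiderivations of A with values in P. Hence the module of symbols Smbl_k(A,P) := Diff_k(A,P)/Diff_{k−1}(A,P) is isomorphic to the module of symmetric k-multiderivations of A with values in P. -/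
/-- The symbol of a differential operator:
`s_Δ(a₁,…,a_k) = (δ_{a₁}(δ_{a₂}(⋯ δ_{a_k}(Δ) ⋯)))(1)`. -/
def symbolMap (A : Type*) [CommRing A] {P : Type*} [AddCommGroup P] [Module A P]
    (k : ℕ) (Δ : A → P) : (Fin k → A) → P :=
  fun v => ((List.ofFn v).foldr (dop A) Δ) 1

/-- Symmetric `k`-multiderivations of `A` with values in `P` : `𝕜`-multilinear maps,
invariant under all permutations of the arguments, satisfying the Leibniz rule in
each argument. -/
def IsSymMultiDeriv (𝕜 : Type*) [Field 𝕜] (A : Type*) [CommRing A] [Algebra 𝕜 A]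
    {P : Type*} [AddCommGroup P] [Module 𝕜 P] [Module A P] (k : ℕ)
    (s : (Fin k → A) → P) : Prop :=
  (∀ (v : Fin k → A) (i : Fin k) (x y : A),
      s (Function.update v i (x + y)) = s (Function.update v i x) + s (Function.update v i y)) ∧
  (∀ (v : Fin k → A) (i : Fin k) (c : 𝕜) (x : A),
      s (Function.update v i (c • x)) = c • s (Function.update v i x)) ∧
  (∀ (v : Fin k → A) (e : Equiv.Perm (Fin k)), s (v ∘ e) = s v) ∧
  (∀ (v : Fin k → A) (i : Fin k) (x y : A),
      s (Function.update v i (x * y)) =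
        x • s (Function.update v i y) + y • s (Function.update v i x))

section Dop

variable {A : Type*} [CommRing A] {M N : Type*} [AddCommGroup M] [Module A M]
  [AddCommGroup N] [Module A N]

theorem dop_comm (a b : A) (f : M → N) : dop A a (dop A b f) = dop A b (dop A a f) := by
  funext p
  simp only [dop, smul_sub, smul_smul, mul_comm]
  abel

instance : LeftCommutative (dop A (M := M) (N := N)) := ⟨dop_comm⟩

variable (M N) in
def dopₗ (a : A) : (M → N) →ₗ[A] (M → N) where
  toFun := dop A a
  map_add' f g := by
    funext p
    simp only [dop, Pi.add_apply, smul_add]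
    abel
  map_smul' c f := by
    funext p
    simp only [dop, Pi.smul_apply, RingHom.id_apply, smul_sub, smul_comm a c]

@[simp]
theorem dopₗ_apply (a : A) (f : M → N) : dopₗ M N a f = dop A a f := rfl

variable (M N) in
def iterDop : List A → (M → N) →ₗ[A] (M → N)
  | [] => LinearMap.id
  | a :: l => dopₗ M N a ∘ₗ iterDop l

@[simp]
theorem iterDop_nil (f : M → N) : iterDop M N ([] : List A) f = f := rfl

@[simp]
theorem iterDop_cons (a : A) (l : List A) (f : M → N) :
    iterDop M N (a :: l) f = dop A a (iterDop M N l f) := rfl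

theorem iterDop_eq_foldr (l : List A) (f : M → N) : iterDop M N l f = l.foldr (dop A) f := by
  induction l with
  | nil => rfl
  | cons a l ih => rw [iterDop_cons, ih, List.foldr_cons]

theorem iterDop_perm {l₁ l₂ : List A} (h : l₁.Perm l₂) (f : M → N) :
    iterDop M N l₁ f = iterDop M N l₂ f := by
  rw [iterDop_eq_foldr, iterDop_eq_foldr, h.foldr_eq]

theorem iterDop_dop (l : List A) (a : A) (f : M → N) :
    iterDop M N l (dop A a f) = dop A a (iterDop M N l f) := by
  induction l with
  | nil => rfl
  | cons b l ih => rw [iterDop_cons, iterDop_cons, ih, dop_comm]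

theorem isDiffOp_iff_iterDop_eq_zero {k : ℕ} {f : M → N} :
    IsDiffOp A k f ↔ ∀ v : Fin (k + 1) → A, iterDop M N (List.ofFn v) f = 0 := by
  induction k generalizing f with
  | zero =>
    simp only [IsDiffOp, List.ofFn_succ, List.ofFn_zero, iterDop_cons, iterDop_nil]
    exact ⟨fun h v => h (v 0), fun h a => h fun _ => a⟩
  | succ k ih =>
    simp only [IsDiffOp, ih, Fin.forall_fin_succ_pi (n := k + 1), List.ofFn_cons, iterDop_cons,
      iterDop_dop]

theorem IsDiffOp.iterDop {j k : ℕ} {f : M → N} (hf : IsDiffOp A k f) (l : List A)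
    (hl : j + l.length = k) : IsDiffOp A j (iterDop M N l f) := by
  subst hl
  induction l generalizing j with
  | nil => exact hf
  | cons a l ih => exact ih (j := j + 1) (by simpa [add_assoc, add_comm 1] using hf) a

theorem IsDiffOp.succ {k : ℕ} {f : M → N} (hf : IsDiffOp A k f) : IsDiffOp A (k + 1) f := by
  rw [isDiffOp_iff_iterDop_eq_zero] at hf ⊢
  intro v
  rw [List.ofFn_succ, iterDop_cons, hf]
  exact (dopₗ M N _).map_zero

variable (A M N) in
def diffOpSubmodule (k : ℕ) : Submodule A (M → N) :=
  ⨅ v : Fin (k + 1) → A, LinearMap.ker (iterDop M N (List.ofFn v))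

theorem mem_diffOpSubmodule {k : ℕ} {f : M → N} :
    f ∈ diffOpSubmodule A M N k ↔ IsDiffOp A k f := by
  simp [diffOpSubmodule, Submodule.mem_iInf, isDiffOp_iff_iterDop_eq_zero]

end Dop

section Symbol

variable {A : Type*} [CommRing A] {P : Type*} [AddCommGroup P] [Module A P]

theorem IsDiffOp.apply_eq_smul_apply_one {f : A → P} (hf : IsDiffOp A 0 f) (a : A) :
    f a = a • f 1 := by
  simpa [dop, sub_eq_zero] using congrFun (hf a) 1

theorem symbolMap_eq_iterDop {k : ℕ} (f : A → P) (v : Fin k → A) :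
    symbolMap A k f v = iterDop A P (List.ofFn v) f 1 := by
  rw [iterDop_eq_foldr]
  rfl

variable (A P) in
def symbolMapₗ (k : ℕ) : (A → P) →ₗ[A] (Fin k → A) → P where
  toFun := symbolMap A k
  map_add' f g := by
    funext v
    simp [symbolMap_eq_iterDop]
  map_smul' c f := by
    funext v
    simp [symbolMap_eq_iterDop]

theorem symbolMapₗ_apply {k : ℕ} (f : A → P) : symbolMapₗ A P k f = symbolMap A k f := rfl

theorem symbolMap_comp_perm {k : ℕ} (f : A → P) (v : Fin k → A) (e : Equiv.Perm (Fin k)) :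
    symbolMap A k f (v ∘ e) = symbolMap A k f v := by
  simp only [symbolMap_eq_iterDop]
  rw [iterDop_perm (e.ofFn_comp_perm v)]

theorem symbolMap_update {k : ℕ} (f : A → P) (v : Fin (k + 1) → A) (i : Fin (k + 1)) (x : A) :
    symbolMap A (k + 1) f (Function.update v i x)
      = dop A x (iterDop A P (List.ofFn (i.removeNth v)) f) 1 := by
  rw [← symbolMap_comp_perm f _ i.cycleRange.symm, ← Fin.cons_removeNth_eq_comp_cycleRange_symm,
    Function.update_self, Fin.removeNth_update, symbolMap_eq_iterDop, List.ofFn_cons, iterDop_cons]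

theorem symbolMap_eq_zero_iff {k : ℕ} {f : A → P} (hf : IsDiffOp A (k + 1) f) :
    symbolMap A (k + 1) f = 0 ↔ IsDiffOp A k f := by
  rw [isDiffOp_iff_iterDop_eq_zero]
  refine ⟨fun h v => funext fun p => ?_, fun h => funext fun v => ?_⟩
  · have h0 : IsDiffOp A 0 (iterDop A P (List.ofFn v) f) := hf.iterDop _ (by simp)
    rw [h0.apply_eq_smul_apply_one, ← symbolMap_eq_iterDop, h]
    simp
  · rw [symbolMap_eq_iterDop, h]
    rfl

end Symbol

section LinearSymbol

variable {𝕜 : Type*} [CommRing 𝕜] {A : Type*} [CommRing A] [Algebra 𝕜 A]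
  {P : Type*} [AddCommGroup P] [Module 𝕜 P] [Module A P] [IsScalarTower 𝕜 A P]

def dopLinearMap (a : A) (g : A →ₗ[𝕜] P) : A →ₗ[𝕜] P :=
  g ∘ₗ LinearMap.mulLeft 𝕜 a - a • g

theorem coe_foldr_dopLinearMap (l : List A) (g : A →ₗ[𝕜] P) :
    ⇑(l.foldr dopLinearMap g) = iterDop A P l g := by
  induction l with
  | nil => rfl
  | cons a l ih =>
    rw [List.foldr_cons, iterDop_cons, ← ih]
    rfl

def derivationOfIsDiffOpOne (g : A →ₗ[𝕜] P) (hg : IsDiffOp A 1 g) : Derivation 𝕜 A P :=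
  Derivation.mk' (g - (LinearMap.toSpanSingleton A P (g 1)).restrictScalars 𝕜) fun x y => by
    have h := congrFun (hg y x) 1
    simp only [dop, smul_eq_mul, mul_one, Pi.zero_apply, mul_comm y x] at h
    simp only [LinearMap.sub_apply, LinearMap.restrictScalars_apply,
      LinearMap.toSpanSingleton_apply]
    rw [← sub_eq_zero, ← h]
    module

theorem derivationOfIsDiffOpOne_apply (g : A →ₗ[𝕜] P) (hg : IsDiffOp A 1 g) (x : A) :
    derivationOfIsDiffOpOne g hg x = dop A x g 1 := by
  simp [derivationOfIsDiffOpOne, dop]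

end LinearSymbol

theorem symbolMap_isSymMultiDeriv {𝕜 : Type*} [Field 𝕜] {A : Type*} [CommRing A] [Algebra 𝕜 A]
    {P : Type*} [AddCommGroup P] [Module 𝕜 P] [Module A P] [IsScalarTower 𝕜 A P] {k : ℕ}
    {Δ : A →ₗ[𝕜] P} (hΔ : IsDiffOp A (k + 1) Δ) :
    IsSymMultiDeriv 𝕜 A (k + 1) (symbolMap A (k + 1) Δ) := by
  have slot : ∀ v i, ∃ D : Derivation 𝕜 A P,
      ∀ x, symbolMap A (k + 1) Δ (Function.update v i x) = D x := by
    intro v i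
    set g := (List.ofFn (i.removeNth v)).foldr dopLinearMap Δ
    have hg : IsDiffOp A 1 g := by
      rw [coe_foldr_dopLinearMap]
      exact hΔ.iterDop _ (by simp [add_comm])
    refine ⟨derivationOfIsDiffOpOne g hg, fun x => ?_⟩
    rw [symbolMap_update, derivationOfIsDiffOpOne_apply, coe_foldr_dopLinearMap]
  refine ⟨fun v i x y => ?_, fun v i c x => ?_, symbolMap_comp_perm _, fun v i x y => ?_⟩ <;>
    obtain ⟨D, hD⟩ := slot v i <;> simp only [hD]
  · exact D.map_add x y
  · exact D.map_smul c x
  · exact D.leibniz x y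

section SymMultiDeriv

variable {𝕜 : Type*} [Field 𝕜] {A : Type*} [CommRing A] [Algebra 𝕜 A]
  {P : Type*} [AddCommGroup P] [Module 𝕜 P] [Module A P]

theorem IsSymMultiDeriv.apply_cons_removeNth {k : ℕ} {s : (Fin (k + 1) → A) → P}
    (hs : IsSymMultiDeriv 𝕜 A (k + 1) s) (v : Fin (k + 1) → A) (m : Fin (k + 1)) :
    s (Fin.cons (v m) (m.removeNth v)) = s v := by
  rw [Fin.cons_removeNth_eq_comp_cycleRange_symm, hs.2.2.1]

theorem IsSymMultiDeriv.cons {k : ℕ} {s : (Fin (k + 1) → A) → P}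
    (hs : IsSymMultiDeriv 𝕜 A (k + 1) s) (a : A) :
    IsSymMultiDeriv 𝕜 A k fun w => s (Fin.cons a w) := by
  obtain ⟨hadd, hsmul, hperm, hmul⟩ := hs
  refine ⟨fun v i x y => ?_, fun v i c x => ?_, fun v e => ?_, fun v i x y => ?_⟩
  · simpa only [Fin.cons_update] using hadd _ i.succ x y
  · simpa only [Fin.cons_update] using hsmul _ i.succ c x
  · convert hperm (Fin.cons a v) (Equiv.Perm.decomposeFin.symm (0, e)) using 2
    funext j
    cases j using Fin.cases <;> simp
  · simpa only [Fin.cons_update] using hmul _ i.succ x y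

variable [IsScalarTower 𝕜 A P]

variable (𝕜 A P) in
def symMultiDerivations (k : ℕ) : Submodule A ((Fin k → A) → P) where
  carrier := {s | IsSymMultiDeriv 𝕜 A k s}
  zero_mem' := by simp [IsSymMultiDeriv]
  add_mem' := by
    rintro s t ⟨s₁, s₂, s₃, s₄⟩ ⟨t₁, t₂, t₃, t₄⟩
    refine ⟨fun v i x y => ?_, fun v i c x => ?_, fun v e => ?_, fun v i x y => ?_⟩ <;>
      simp only [Pi.add_apply, s₁, s₂, s₃, s₄, t₁, t₂, t₃, t₄, smul_add] <;> abel
  smul_mem' := by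
    rintro a s ⟨s₁, s₂, s₃, s₄⟩
    refine ⟨fun v i x y => ?_, fun v i c x => ?_, fun v e => ?_, fun v i x y => ?_⟩ <;>
      simp only [Pi.smul_apply, s₁, s₂, s₃, s₄, smul_add, smul_comm a]

def derivationCons {k : ℕ} (s : symMultiDerivations 𝕜 A P (k + 1)) :
    Derivation 𝕜 A (symMultiDerivations 𝕜 A P k) :=
  have cons_eq (x : A) (w : Fin k → A) : (Fin.cons x w : Fin (k + 1) → A)
      = Function.update (Fin.cons 0 w) 0 x := (Fin.update_cons_zero ..).symm
  Derivation.mk'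
    { toFun a := ⟨fun w => s.1 (Fin.cons a w), s.2.cons a⟩
      map_add' a b := by
        ext w
        change s.1 (Fin.cons (a + b) w) = s.1 (Fin.cons a w) + s.1 (Fin.cons b w)
        rw [cons_eq (a + b), cons_eq a, cons_eq b]
        exact s.2.1 _ 0 a b
      map_smul' c a := by
        ext w
        change s.1 (Fin.cons (c • a) w) = c • s.1 (Fin.cons a w)
        rw [cons_eq (c • a), cons_eq a]
        exact s.2.2.1 _ 0 c a }
    fun a b => by
      ext w
      change s.1 (Fin.cons (a * b) w) = a • s.1 (Fin.cons b w) + b • s.1 (Fin.cons a w)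
      rw [cons_eq (a * b), cons_eq a, cons_eq b]
      exact s.2.2.2.2 _ 0 a b

theorem derivationCons_apply {k : ℕ} (s : symMultiDerivations 𝕜 A P (k + 1)) (a : A)
    (w : Fin k → A) : (derivationCons s a : (Fin k → A) → P) w = s.1 (Fin.cons a w) := rfl

end SymMultiDeriv

theorem Module.Finite.exists_sum_smul_eq_self (R M : Type*) [Semiring R] [AddCommMonoid M]
    [Module R M] [Module.Finite R M] [Module.Projective R M] :
    ∃ (n : ℕ) (ω : Fin n → M) (φ : Fin n → M →ₗ[R] R), ∀ x, ∑ i, φ i x • ω i = x := by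
  obtain ⟨n, f, g, -, -, hfg⟩ := Module.Finite.exists_comp_eq_id_of_projective R M
  refine ⟨n, fun i => f (Pi.single i 1), fun i => LinearMap.proj i ∘ₗ g, fun x => ?_⟩
  conv_rhs => rw [← LinearMap.id_apply (R := R) x, ← hfg, LinearMap.comp_apply,
    pi_eq_sum_univ' (g x), map_sum]
  simp

theorem Derivation.sum_smul_liftKaehlerDifferential {R S : Type*} [CommRing R] [CommRing S]
    [Algebra R S] {n : ℕ} {ω : Fin n → Ω[S⁄R]} {φ : Fin n → Ω[S⁄R] →ₗ[S] S}
    (hdual : ∀ x, ∑ i, φ i x • ω i = x) {M : Type*} [AddCommGroup M] [Module R M] [Module S M]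
    [IsScalarTower R S M] (D : Derivation R S M) (a : S) :
    ∑ i, (φ i).compDer (KaehlerDifferential.D R S) a • D.liftKaehlerDifferential (ω i) = D a := by
  conv_rhs => rw [← D.liftKaehlerDifferential_comp_D a, ← hdual (KaehlerDifferential.D R S a)]
  simp [map_sum]

theorem Fin.removeNth_cons_succ {α : Type*} {n : ℕ} (a : α) (w : Fin (n + 1) → α)
    (m : Fin (n + 1)) :
    m.succ.removeNth (Fin.cons a w : Fin (n + 2) → α) = Fin.cons a (m.removeNth w) := by
  funext j
  cases j using Fin.cases <;> simp [Fin.removeNth_apply, Fin.succ_succAbove_succ]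

section CompDerivation

variable {𝕜 : Type*} [CommRing 𝕜] {A : Type*} [CommRing A] [Algebra 𝕜 A]
  {P : Type*} [AddCommGroup P] [Module 𝕜 P] [Module A P]

theorem dop_comp_mulLeft (a c : A) (f : A → P) :
    dop A a (f ∘ (c * ·)) = dop A a f ∘ (c * ·) := by
  funext p
  simp only [dop, Function.comp_apply, smul_eq_mul, mul_left_comm]

theorem dop_comp_derivation (a : A) (g : A →ₗ[𝕜] P) (X : Derivation 𝕜 A A) :
    dop A a (g ∘ X) = dop A a g ∘ X + g ∘ (X a * ·) := by
  funext p
  simp only [dop, Function.comp_apply, Pi.add_apply, smul_eq_mul, X.leibniz, map_add,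
    mul_comm p]
  abel

variable [IsScalarTower 𝕜 A P]

/-- Each `δ_{vₘ}` either passes through `X` or hits it, turning it into multiplication by
`X vₘ`. -/
theorem iterDop_comp_derivation (g : A →ₗ[𝕜] P) (X : Derivation 𝕜 A A) {n : ℕ}
    (v : Fin (n + 1) → A) :
    iterDop A P (List.ofFn v) (g ∘ X) = iterDop A P (List.ofFn v) g ∘ X
      + ∑ m, iterDop A P (List.ofFn (m.removeNth v)) g ∘ (X (v m) * ·) := by
  induction n with
  | zero =>
    simp [List.ofFn_succ, dop_comp_derivation]
  | succ n ih =>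
    obtain ⟨a, w, rfl⟩ : ∃ a w, v = Fin.cons a w := ⟨v 0, Fin.tail v, (Fin.cons_self_tail v).symm⟩
    have hG := coe_foldr_dopLinearMap (List.ofFn w) g
    rw [Fin.sum_univ_succ, List.ofFn_cons, iterDop_cons, ih, ← dopₗ_apply, map_add, map_sum,
      dopₗ_apply, ← hG, dop_comp_derivation, hG]
    simp only [dopₗ_apply, dop_comp_mulLeft, Fin.removeNth_zero, Fin.tail_cons,
      Fin.removeNth_cons_succ, List.ofFn_cons, iterDop_cons, Fin.cons_zero, Fin.cons_succ,
      add_assoc]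

theorem IsDiffOp.comp_derivation {j : ℕ} {g : A →ₗ[𝕜] P} (hg : IsDiffOp A j g)
    (X : Derivation 𝕜 A A) : IsDiffOp A (j + 1) (g ∘ X) := by
  rw [isDiffOp_iff_iterDop_eq_zero]
  intro v
  rw [iterDop_comp_derivation, isDiffOp_iff_iterDop_eq_zero.mp hg.succ v]
  simp only [isDiffOp_iff_iterDop_eq_zero.mp hg, Pi.zero_comp, Finset.sum_const_zero, add_zero]

theorem symbolMap_comp_derivation {j : ℕ} {g : A →ₗ[𝕜] P} (hg : IsDiffOp A j g)
    (X : Derivation 𝕜 A A) (v : Fin (j + 1) → A) :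
    symbolMap A (j + 1) (g ∘ X) v = ∑ m, X (v m) • symbolMap A j g (m.removeNth v) := by
  rw [symbolMap_eq_iterDop, iterDop_comp_derivation, isDiffOp_iff_iterDop_eq_zero.mp hg v]
  simp only [Pi.add_apply, Pi.zero_apply, Function.comp_apply, zero_add, Finset.sum_apply,
    mul_one, symbolMap_eq_iterDop]
  refine Finset.sum_congr rfl fun m _ => ?_
  exact (hg.iterDop _ (by simp)).apply_eq_smul_apply_one _

end CompDerivation

section Construction

variable {𝕜 : Type*} [Field 𝕜] {A : Type*} [CommRing A] [Algebra 𝕜 A]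
  {P : Type*} [AddCommGroup P] [Module 𝕜 P] [Module A P] [IsScalarTower 𝕜 A P]
  {n : ℕ} (ω : Fin n → Ω[A⁄𝕜]) (φ : Fin n → Ω[A⁄𝕜] →ₗ[A] A)

noncomputable def diffOpOfSymbol : (j : ℕ) → symMultiDerivations 𝕜 A P j → A →ₗ[𝕜] P
  | 0, t => (LinearMap.toSpanSingleton A P (t.1 Fin.elim0)).restrictScalars 𝕜
  | j + 1, t => (j + 1 : 𝕜)⁻¹ • ∑ i, diffOpOfSymbol j
      ((derivationCons t).liftKaehlerDifferential (ω i)) ∘ₗ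
        ((φ i).compDer (KaehlerDifferential.D 𝕜 A)).toLinearMap

theorem isDiffOp_diffOpOfSymbol :
    ∀ (j : ℕ) (t : symMultiDerivations 𝕜 A P j), IsDiffOp A j (diffOpOfSymbol ω φ j t)
  | 0, t => fun a => funext fun p => by
    simp [diffOpOfSymbol, dop, mul_smul]
  | j + 1, t => by
    rw [← mem_diffOpSubmodule, diffOpOfSymbol, LinearMap.coe_smul, LinearMap.coe_sum]
    refine Submodule.smul_of_tower_mem _ _ (Submodule.sum_mem _ fun i _ => ?_)
    rw [mem_diffOpSubmodule, LinearMap.coe_comp]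
    exact (isDiffOp_diffOpOfSymbol j _).comp_derivation _

theorem symbolMap_diffOpOfSymbol [CharZero 𝕜] (hdual : ∀ x, ∑ i, φ i x • ω i = x) :
    ∀ (j : ℕ) (t : symMultiDerivations 𝕜 A P j), symbolMap A j (diffOpOfSymbol ω φ j t) = t
  | 0, t => funext fun v => by
    simp [symbolMap, diffOpOfSymbol, Subsingleton.elim v Fin.elim0]
  | j + 1, t => funext fun v => by
    set X : Fin n → Derivation 𝕜 A A := fun i => (φ i).compDer (KaehlerDifferential.D 𝕜 A)
    set tᵢ := fun i => (derivationCons t).liftKaehlerDifferential (ω i)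
    have collapse : ∀ a w, ∑ i, X i a • (tᵢ i).1 w = t.1 (Fin.cons a w) := fun a w => by
      rw [← derivationCons_apply, ← Derivation.sum_smul_liftKaehlerDifferential hdual]
      simp [X, tᵢ, Finset.sum_apply]
    calc symbolMap A (j + 1) (diffOpOfSymbol ω φ (j + 1) t) v
        = (j + 1 : 𝕜)⁻¹ • ∑ i, symbolMap A (j + 1) (diffOpOfSymbol ω φ j (tᵢ i) ∘ X i) v := by
          rw [← symbolMapₗ_apply, diffOpOfSymbol, LinearMap.coe_smul, LinearMap.coe_sum,
            LinearMap.map_smul_of_tower, map_sum]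
          simp [symbolMapₗ_apply, X, tᵢ]
      _ = (j + 1 : 𝕜)⁻¹ • ∑ m, ∑ i, X i (v m) • (tᵢ i).1 (m.removeNth v) := by
          simp only [symbolMap_comp_derivation (isDiffOp_diffOpOfSymbol ω φ j _),
            symbolMap_diffOpOfSymbol hdual j]
          rw [Finset.sum_comm]
      _ = (j + 1 : 𝕜)⁻¹ • ∑ m : Fin (j + 1), t.1 v := by
          simp only [collapse, t.2.apply_cons_removeNth]
      _ = t.1 v := by
          rw [Finset.sum_const, Finset.card_univ, Fintype.card_fin, ← Nat.cast_smul_eq_nsmul 𝕜,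
            smul_smul, Nat.cast_add_one, inv_mul_cancel₀ (Nat.cast_add_one_ne_zero j), one_smul]

end Construction

/-- here the `k ≥ 1` of the informal statement is `k + 1`.  Over a
smooth algebra (`Ω_{A/𝕜}` finitely generated and projective) over a field of
characteristic zero:  for `Δ ∈ Diff_{k+1}(A,P)` the map `s_Δ` is a symmetric
`(k+1)`-multiderivation; `Δ ↦ s_Δ` is `A`-linear, its kernel is exactly
`Diff_k(A,P)`, and it maps `Diff_{k+1}(A,P)` onto the symmetric
`(k+1)`-multiderivations; hence `Smbl_{k+1}(A,P)` is isomorphic to the module of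
symmetric `(k+1)`-multiderivations of `A` with values in `P`. -/
theorem symbol_module_description
    (𝕜 : Type*) [Field 𝕜] [CharZero 𝕜] (A : Type*) [CommRing A] [Algebra 𝕜 A]
    [Module.Finite A (KaehlerDifferential 𝕜 A)]
    [Module.Projective A (KaehlerDifferential 𝕜 A)]
    (P : Type*) [AddCommGroup P] [Module 𝕜 P] [Module A P] [IsScalarTower 𝕜 A P]
    (k : ℕ) :
    -- s_Δ is a symmetric multiderivation
    (∀ Δ : A →ₗ[𝕜] P, IsDiffOp A (k + 1) ⇑Δ →
        IsSymMultiDeriv 𝕜 A (k + 1) (symbolMap A (k + 1) ⇑Δ)) ∧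
    -- Δ ↦ s_Δ is A-linear
    (∀ Δ Δ' : A →ₗ[𝕜] P, IsDiffOp A (k + 1) ⇑Δ → IsDiffOp A (k + 1) ⇑Δ' →
        symbolMap A (k + 1) ⇑(Δ + Δ')
          = symbolMap A (k + 1) ⇑Δ + symbolMap A (k + 1) ⇑Δ') ∧
    (∀ (a : A) (Δ : A →ₗ[𝕜] P), IsDiffOp A (k + 1) ⇑Δ →
        symbolMap A (k + 1) ⇑(a • Δ) = a • symbolMap A (k + 1) ⇑Δ) ∧
    -- its kernel is exactly Diff_k(A,P)
    (∀ Δ : A →ₗ[𝕜] P, IsDiffOp A (k + 1) ⇑Δ →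
        (symbolMap A (k + 1) ⇑Δ = 0 ↔ IsDiffOp A k ⇑Δ)) ∧
    -- and it is surjective onto the symmetric multiderivations
    (∀ s : (Fin (k + 1) → A) → P, IsSymMultiDeriv 𝕜 A (k + 1) s →
        ∃ Δ : A →ₗ[𝕜] P, IsDiffOp A (k + 1) ⇑Δ ∧ symbolMap A (k + 1) ⇑Δ = s) := by
  obtain ⟨n, ω, φ, hdual⟩ := Module.Finite.exists_sum_smul_eq_self A (KaehlerDifferential 𝕜 A)
  refine ⟨fun Δ hΔ => symbolMap_isSymMultiDeriv hΔ, fun Δ Δ' _ _ => ?_, fun a Δ _ => ?_,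
    fun Δ hΔ => symbolMap_eq_zero_iff hΔ, fun s hs => ?_⟩
  · exact (symbolMapₗ A P (k + 1)).map_add Δ Δ'
  · exact (symbolMapₗ A P (k + 1)).map_smul a Δ
  · exact ⟨_, isDiffOp_diffOpOfSymbol ω φ (k + 1) ⟨s, hs⟩,
      symbolMap_diffOpOfSymbol ω φ hdual (k + 1) ⟨s, hs⟩⟩
end

section
/- Let V be a vector space over a field 𝕜, u : V → 𝕜 a linear functional, and v ∈ V an element with u(v) ≠ 0. Let d : Λ^k(V) → Λ^{k−1}(V) be the interior product with u, determined by d(v₁∧⋯∧v_k) = Σ_{i=1}^k (−1)^{i+1} u(v_i)·v₁∧⋯∧v̂_i∧⋯∧v_k, and let s : Λ^k(V) → Λ^{k+1}(V) be the exterior product with v, s(w) = v∧w. Then d∘s + s∘d = u(v)·id on every Λ^k(V); consequently both complexes 0 ← 𝕜 ← V ← Λ²(V) ← ⋯ (with differential d) and 0 → 𝕜 → V → Λ²(V) → ⋯ (with differential s) are exact in every degree. -/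
section
variable (𝕜 : Type*) [Field 𝕜] (V : Type*) [AddCommGroup V] [Module 𝕜 V]

/-- `wedgeList v = v₁ ∧ ⋯ ∧ v_m`, the product `ι(v₁) ⋯ ι(v_m)` in the exterior
algebra. -/
noncomputable def wedgeList {m : ℕ} (v : Fin m → V) : ExteriorAlgebra 𝕜 V :=
  ((List.ofFn v).map ⇑(ExteriorAlgebra.ι 𝕜 (M := V))).prod

/-- The `k`-th exterior power `Λ^k(V)`, as the subspace of the exterior algebra spanned
by the decomposable elements `v₁ ∧ ⋯ ∧ v_k`. -/
noncomputable def extPow (k : ℕ) : Submodule 𝕜 (ExteriorAlgebra 𝕜 V) :=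
  Submodule.span 𝕜 {x | ∃ v : Fin k → V, x = wedgeList 𝕜 V v}

/-- `v₁ ∧ ⋯ ∧ v̂_j ∧ ⋯ ∧ v_m` (the `j`-th factor omitted). -/
noncomputable def wedgeListOmit {m : ℕ} (v : Fin m → V) (j : Fin m) :
    ExteriorAlgebra 𝕜 V :=
  (((List.ofFn v).eraseIdx (j : ℕ)).map ⇑(ExteriorAlgebra.ι 𝕜 (M := V))).prod

end

/-!
Writing `ι v * (w₁ ∧ ⋯ ∧ w_k) = v ∧ w₁ ∧ ⋯ ∧ w_k`, the `j = 0` term of `d` applied to it is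
`u(v) · w₁ ∧ ⋯ ∧ w_k`, and the remaining terms are `-(v ∧ d(w₁ ∧ ⋯ ∧ w_k))`: this is the
homotopy identity `d s + s d = u(v)`. Since `u(v)` is invertible, `u(v)⁻¹ s` and `u(v)⁻¹ d`
contract the two complexes, so every cycle is a boundary.
-/

section Homotopy

variable {K M : Type*} [DivisionRing K] [AddCommGroup M] [Module K M]

theorem eq_map_inv_smul_of_homotopy (d s : M →ₗ[K] M) {c : K} (hc : c ≠ 0) {x : M}
    (hx : d (s x) + s (d x) = c • x) (hdx : d x = 0) : d (c⁻¹ • s x) = x := by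
  rw [hdx, map_zero, add_zero] at hx
  rw [map_smul, hx, inv_smul_smul₀ hc]

end Homotopy

section ExteriorPower

variable {𝕜 : Type*} [Field 𝕜] {V : Type*} [AddCommGroup V] [Module 𝕜 V]

theorem wedgeList_cons {m : ℕ} (v : V) (w : Fin m → V) :
    wedgeList 𝕜 V (Fin.cons v w) = ExteriorAlgebra.ι 𝕜 v * wedgeList 𝕜 V w := by
  simp [wedgeList, List.ofFn_succ]

theorem wedgeListOmit_cons_zero {m : ℕ} (v : V) (w : Fin m → V) :
    wedgeListOmit 𝕜 V (Fin.cons v w) 0 = wedgeList 𝕜 V w := by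
  simp [wedgeListOmit, wedgeList, List.ofFn_succ]

theorem wedgeListOmit_cons_succ {m : ℕ} (v : V) (w : Fin m → V) (j : Fin m) :
    wedgeListOmit 𝕜 V (Fin.cons v w) j.succ
      = ExteriorAlgebra.ι 𝕜 v * wedgeListOmit 𝕜 V w j := by
  simp [wedgeListOmit, List.ofFn_succ, List.eraseIdx_cons_succ]

theorem wedgeList_mem_extPow {k : ℕ} (w : Fin k → V) : wedgeList 𝕜 V w ∈ extPow 𝕜 V k :=
  Submodule.subset_span ⟨w, rfl⟩

theorem list_prod_map_ι_mem_extPow (l : List V) :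
    (l.map ⇑(ExteriorAlgebra.ι 𝕜 (M := V))).prod ∈ extPow 𝕜 V l.length := by
  have hofFn : List.ofFn (fun i : Fin l.length => l.get i) = l := List.ofFn_get l
  simpa [wedgeList, hofFn] using wedgeList_mem_extPow (𝕜 := 𝕜) (fun i : Fin l.length => l.get i)

theorem wedgeListOmit_mem_extPow {k : ℕ} (w : Fin (k + 1) → V) (j : Fin (k + 1)) :
    wedgeListOmit 𝕜 V w j ∈ extPow 𝕜 V k := by
  have hlen : ((List.ofFn w).eraseIdx j).length = k := by simp [List.length_eraseIdx, j.isLt]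
  have hmem := list_prod_map_ι_mem_extPow (𝕜 := 𝕜) ((List.ofFn w).eraseIdx j)
  rwa [hlen] at hmem

theorem map_mem_of_mem_extPow {k : ℕ} {f : ExteriorAlgebra 𝕜 V →ₗ[𝕜] ExteriorAlgebra 𝕜 V}
    {p : Submodule 𝕜 (ExteriorAlgebra 𝕜 V)} (hf : ∀ w : Fin k → V, f (wedgeList 𝕜 V w) ∈ p)
    {x : ExteriorAlgebra 𝕜 V} (hx : x ∈ extPow 𝕜 V k) : f x ∈ p := by
  have hle : extPow 𝕜 V k ≤ p.comap f := Submodule.span_le.mpr <| by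
    rintro _ ⟨w, rfl⟩
    exact hf w
  exact hle hx

variable (u : V →ₗ[𝕜] 𝕜) {dM : ExteriorAlgebra 𝕜 V →ₗ[𝕜] ExteriorAlgebra 𝕜 V}
  (hd : ∀ (m : ℕ) (w : Fin m → V),
    dM (wedgeList 𝕜 V w) = ∑ j : Fin m, ((-1 : 𝕜) ^ (j : ℕ) * u (w j)) • wedgeListOmit 𝕜 V w j)
include hd

theorem interior_ι_mul_wedgeList (v : V) {k : ℕ} (w : Fin k → V) :
    dM (ExteriorAlgebra.ι 𝕜 v * wedgeList 𝕜 V w)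
      = u v • wedgeList 𝕜 V w - ExteriorAlgebra.ι 𝕜 v * dM (wedgeList 𝕜 V w) := by
  have hsucc : ∀ j : Fin k,
      ((-1 : 𝕜) ^ (j.succ : ℕ) * u ((Fin.cons v w : Fin (k + 1) → V) j.succ)) •
          wedgeListOmit 𝕜 V (Fin.cons v w) j.succ
        = -(ExteriorAlgebra.ι 𝕜 v * (((-1 : 𝕜) ^ (j : ℕ) * u (w j)) • wedgeListOmit 𝕜 V w j)) := by
    intro j
    rw [wedgeListOmit_cons_succ, Fin.cons_succ, Fin.val_succ, pow_succ, mul_smul_comm,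
      ← neg_smul]
    congr 1
    ring
  rw [← wedgeList_cons, hd, Fin.sum_univ_succ, Fin.cons_zero, wedgeListOmit_cons_zero,
    Fin.val_zero, pow_zero, one_mul, hd, Finset.mul_sum]
  simp only [hsucc, Finset.sum_neg_distrib, sub_eq_add_neg]

theorem interior_mem_extPow {k : ℕ} {x : ExteriorAlgebra 𝕜 V} (hx : x ∈ extPow 𝕜 V (k + 1)) :
    dM x ∈ extPow 𝕜 V k :=
  map_mem_of_mem_extPow (fun w => by
    rw [hd]
    exact Submodule.sum_mem _ fun j _ => Submodule.smul_mem _ _ (wedgeListOmit_mem_extPow w j)) hx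

theorem interior_eq_zero_of_mem_extPow_zero {x : ExteriorAlgebra 𝕜 V} (hx : x ∈ extPow 𝕜 V 0) :
    dM x = 0 := by
  simpa using map_mem_of_mem_extPow (p := ⊥) (fun w => by simp [hd]) hx

end ExteriorPower

/-- Let `u : V → 𝕜` be a linear functional and `v ∈ V` with
`u(v) ≠ 0`.  Let `d` be the interior product with `u` (determined by
`d(v₁∧⋯∧v_k) = Σᵢ (−1)^{i+1} u(vᵢ)·v₁∧⋯∧v̂ᵢ∧⋯∧v_k`, i.e. with `0`-based signs
`(−1)^{j}`), and let `s` be the exterior product with `v`.  Then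
`d∘s + s∘d = u(v)·id` on every `Λ^k(V)`, and consequently both complexes
`0 ← 𝕜 ← V ← Λ²(V) ← ⋯` (differential `d`) and `0 → 𝕜 → V → Λ²(V) → ⋯`
(differential `s`) are exact in every degree. -/
theorem interior_exterior_homotopy_and_exactness
    (𝕜 : Type*) [Field 𝕜] (V : Type*) [AddCommGroup V] [Module 𝕜 V]
    (u : V →ₗ[𝕜] 𝕜) (v : V) (huv : u v ≠ 0)
    (dM sM : ExteriorAlgebra 𝕜 V →ₗ[𝕜] ExteriorAlgebra 𝕜 V)
    (hd : ∀ (m : ℕ) (w : Fin m → V),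
      dM (wedgeList 𝕜 V w)
        = ∑ j : Fin m, ((-1 : 𝕜) ^ (j : ℕ) * u (w j)) • wedgeListOmit 𝕜 V w j)
    (hs : ∀ x : ExteriorAlgebra 𝕜 V, sM x = ExteriorAlgebra.ι 𝕜 v * x) :
    -- the homotopy identity on every Λ^k(V)
    (∀ k : ℕ, ∀ x ∈ extPow 𝕜 V k, dM (sM x) + sM (dM x) = u v • x) ∧
    -- the complex with differential d is exact in every degree
    (∀ k : ℕ, ∀ x ∈ extPow 𝕜 V k, dM x = 0 → ∃ y ∈ extPow 𝕜 V (k + 1), dM y = x) ∧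
    -- the complex with differential s is exact in every degree
    (∀ x ∈ extPow 𝕜 V 0, sM x = 0 → x = 0) ∧
    (∀ k : ℕ, ∀ x ∈ extPow 𝕜 V (k + 1), sM x = 0 → ∃ y ∈ extPow 𝕜 V k, sM y = x) := by
  have homotopy : ∀ k, ∀ x ∈ extPow 𝕜 V k, dM (sM x) + sM (dM x) = u v • x := by
    intro k x hx
    refine LinearMap.eqOn_span' (f := dM ∘ₗ sM + sM ∘ₗ dM) (g := u v • LinearMap.id) ?_ hx
    rintro _ ⟨w, rfl⟩
    simp [hs, interior_ι_mul_wedgeList u hd]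
  have exterior_mem : ∀ k, ∀ x ∈ extPow 𝕜 V k, sM x ∈ extPow 𝕜 V (k + 1) := fun k x hx =>
    map_mem_of_mem_extPow (fun w => by
      rw [hs, ← wedgeList_cons]
      exact wedgeList_mem_extPow _) hx
  refine ⟨homotopy, fun k x hx hdx => ?_, fun x hx hsx => ?_, fun k x hx hsx => ?_⟩
  · exact ⟨_, Submodule.smul_mem _ _ (exterior_mem k x hx),
      eq_map_inv_smul_of_homotopy dM sM huv (homotopy k x hx) hdx⟩
  · have := eq_map_inv_smul_of_homotopy dM sM huv (homotopy 0 x hx)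
      (interior_eq_zero_of_mem_extPow_zero u hd hx)
    rwa [hsx, smul_zero, map_zero, eq_comm] at this
  · refine ⟨_, Submodule.smul_mem _ _ (interior_mem_extPow u hd hx),
      eq_map_inv_smul_of_homotopy sM dM huv ?_ hsx⟩
    rw [add_comm]
    exact homotopy (k + 1) x hx
end

section
/- Let D and E be vector spaces over a field 𝕜 and let i : D → D, j : D → E, k : E → D be linear maps forming an exact couple, i.e., im i = ker j, im j = ker k, and im k = ker i. Set d = j∘k (so d∘d = 0), D' = im i, and E' = ker d / im d. Then: there is a well-defined linear map j' : D' → E' with j'(i(x)) = [j(x)] for all x ∈ D, and a well-defined linear map k' : E' → D' with k'([y]) = k(y) for all y ∈ ker d; and, letting i' : D' → D' be the restriction of i, the derived couple (D', E', i', j', k') is again an exact couple: im i' = ker j', im j' = ker k', and im k' = ker i'. -/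
/-!
The maps `j'` and `k'` are obtained by factoring `x ↦ [j x]` through `D ⧸ ker i ≃ im i` (its
kernel `ker i = im k` is sent into `im d`) and `y ↦ k y` through `E' = ker d ⧸ im d` (as
`k ∘ j = 0`). Exactness of `i', j'` rests on `f x ∈ f(p) ↔ x ∈ p + ker f`, which turns both
`[j x] = 0` and `i x ∈ i(im i)` into `x ∈ ker i + ker j`; the other two are element chases.
-/

namespace ExactCouple

open LinearMap Submodule

variable {R D E : Type*} [Ring R] [AddCommGroup D] [Module R D] [AddCommGroup E] [Module R E]

abbrev homology (d : E →ₗ[R] E) : Type _ :=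
  ker d ⧸ (range d).comap (ker d).subtype

variable {i : D →ₗ[R] D} {j : D →ₗ[R] E} {k : E →ₗ[R] D}

theorem apply_apply_eq_zero {M N P : Type*} [AddCommGroup M] [Module R M] [AddCommGroup N]
    [Module R N] [AddCommGroup P] [Module R P] {f : M →ₗ[R] N} {g : N →ₗ[R] P}
    (h : range f = ker g) (x : M) : g (f x) = 0 :=
  (exact_iff.mpr h.symm).apply_apply_eq_zero x

theorem j_mem_ker_comp (hjk : range j = ker k) (x : D) : j x ∈ ker (j ∘ₗ k) := by
  simp [apply_apply_eq_zero hjk]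

theorem k_mem_range_of_mem_ker_comp (hij : range i = ker j) (y : ker (j ∘ₗ k)) :
    k y ∈ range i :=
  hij ▸ y.2

variable (i) in
def derivedI : range i →ₗ[R] range i :=
  i.restrict fun x _ => mem_range_self i x

theorem ker_le_ker_mkQ_comp (hjk : range j = ker k) (hki : range k = ker i) :
    ker i ≤ ker (((range (j ∘ₗ k)).comap (ker (j ∘ₗ k)).subtype).mkQ ∘ₗ
      codRestrict _ j (j_mem_ker_comp hjk)) := by
  rintro x hx
  rw [← hki] at hx
  obtain ⟨z, rfl⟩ := hx
  simp only [mem_ker, comp_apply, mkQ_apply, Quotient.mk_eq_zero, mem_comap]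
  exact mem_range_self (j ∘ₗ k) z

noncomputable def derivedJ (hjk : range j = ker k) (hki : range k = ker i) :
    range i →ₗ[R] homology (j ∘ₗ k) :=
  (ker i).liftQ _ (ker_le_ker_mkQ_comp hjk hki) ∘ₗ i.quotKerEquivRange.symm.toLinearMap

theorem derivedJ_rangeRestrict (hjk : range j = ker k) (hki : range k = ker i) (x : D) :
    derivedJ hjk hki (i.rangeRestrict x) =
      Submodule.Quotient.mk (codRestrict _ j (j_mem_ker_comp hjk) x) := by
  rw [derivedJ, comp_apply, LinearEquiv.coe_coe,
    show i.quotKerEquivRange.symm (i.rangeRestrict x) = (ker i).mkQ x from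
      i.quotKerEquivRange_symm_apply_image x _]
  rfl

theorem range_comp_le_ker_comp_codRestrict (hij : range i = ker j) (hjk : range j = ker k) :
    (range (j ∘ₗ k)).comap (ker (j ∘ₗ k)).subtype ≤
      ker (codRestrict (range i) (k ∘ₗ (ker (j ∘ₗ k)).subtype)
        (k_mem_range_of_mem_ker_comp hij)) := by
  rintro y ⟨z, hz⟩
  have hy : (y : E) = j (k z) := hz.symm
  rw [mem_ker]
  apply Subtype.ext
  change k (y : E) = 0
  rw [hy, apply_apply_eq_zero hjk]

def derivedK (hij : range i = ker j) (hjk : range j = ker k) : homology (j ∘ₗ k) →ₗ[R] range i :=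
  liftQ _ _ (range_comp_le_ker_comp_codRestrict hij hjk)

theorem derivedK_mk (hij : range i = ker j) (hjk : range j = ker k) (y : ker (j ∘ₗ k)) :
    derivedK hij hjk (Submodule.Quotient.mk y) =
      codRestrict (range i) (k ∘ₗ (ker (j ∘ₗ k)).subtype) (k_mem_range_of_mem_ker_comp hij) y :=
  liftQ_apply _ _ y

theorem derivedK_mk_eq_zero_iff (hij : range i = ker j) (hjk : range j = ker k)
    (y : ker (j ∘ₗ k)) : derivedK hij hjk (Submodule.Quotient.mk y) = 0 ↔ k y = 0 := by
  rw [derivedK_mk, ← Subtype.coe_inj]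
  rfl

theorem range_derivedI_eq_ker_derivedJ (hij : range i = ker j) (hjk : range j = ker k)
    (hki : range k = ker i) : range (derivedI i) = ker (derivedJ hjk hki) := by
  ext y
  obtain ⟨x, rfl⟩ := i.surjective_rangeRestrict y
  rw [derivedI, range_restrict, mem_ker, derivedJ_rangeRestrict, Quotient.mk_eq_zero, mem_comap,
    mem_comap]
  change i x ∈ map i (range i) ↔ j x ∈ range (j ∘ₗ k)
  rw [range_comp, hki, ← mem_comap, ← mem_comap, comap_map_eq, comap_map_eq, hij, sup_comm]

theorem range_derivedJ_eq_ker_derivedK (hij : range i = ker j) (hjk : range j = ker k)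
    (hki : range k = ker i) : range (derivedJ hjk hki) = ker (derivedK hij hjk) := by
  refine le_antisymm ?_ ?_
  · rintro _ ⟨y, rfl⟩
    obtain ⟨x, rfl⟩ := i.surjective_rangeRestrict y
    rw [mem_ker, derivedJ_rangeRestrict, derivedK_mk_eq_zero_iff]
    exact apply_apply_eq_zero hjk x
  · intro q hq
    obtain ⟨y, rfl⟩ := Submodule.Quotient.mk_surjective _ q
    rw [mem_ker, derivedK_mk_eq_zero_iff, ← mem_ker, ← hjk] at hq
    obtain ⟨x, hx⟩ := hq
    exact ⟨i.rangeRestrict x, by rw [derivedJ_rangeRestrict]; congr; exact Subtype.ext hx⟩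

theorem range_derivedK_eq_ker_derivedI (hij : range i = ker j) (hjk : range j = ker k)
    (hki : range k = ker i) : range (derivedK hij hjk) = ker (derivedI i) := by
  ext ⟨y, hy⟩
  rw [derivedI, ker_restrict, mem_comap]
  change _ ↔ y ∈ ker i
  rw [← hki]
  constructor
  · rintro ⟨q, hq⟩
    obtain ⟨w, rfl⟩ := Submodule.Quotient.mk_surjective _ q
    rw [derivedK_mk] at hq
    exact ⟨w, congrArg Subtype.val hq⟩
  · rintro ⟨w, rfl⟩
    have hw : w ∈ ker (j ∘ₗ k) := (hij ▸ hy : k w ∈ ker j)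
    exact ⟨Submodule.Quotient.mk ⟨w, hw⟩, by rw [derivedK_mk]; rfl⟩

end ExactCouple

/-- Given an exact couple `(D, E, i, j, k)` (so `im i = ker j`,
`im j = ker k`, `im k = ker i`), set `d = j ∘ k`, `D' = im i` and
`E' = ker d / im d`.  Then there are well-defined linear maps `j' : D' → E'` with
`j'(i x) = [j x]` and `k' : E' → D'` with `k'([y]) = k y`, and, `i'` being the
restriction of `i` to `D'`, the derived couple `(D', E', i', j', k')` is again exact. -/
theorem derived_couple_exact
    (𝕜 : Type*) [Field 𝕜] (D E : Type*)
    [AddCommGroup D] [Module 𝕜 D] [AddCommGroup E] [Module 𝕜 E]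
    (i : D →ₗ[𝕜] D) (j : D →ₗ[𝕜] E) (k : E →ₗ[𝕜] D)
    (hij : LinearMap.range i = LinearMap.ker j)
    (hjk : LinearMap.range j = LinearMap.ker k)
    (hki : LinearMap.range k = LinearMap.ker i) :
    ∃ (j' : ↥(LinearMap.range i) →ₗ[𝕜]
        (↥(LinearMap.ker (j ∘ₗ k)) ⧸
          Submodule.comap (LinearMap.ker (j ∘ₗ k)).subtype (LinearMap.range (j ∘ₗ k))))
      (k' : (↥(LinearMap.ker (j ∘ₗ k)) ⧸
          Submodule.comap (LinearMap.ker (j ∘ₗ k)).subtype (LinearMap.range (j ∘ₗ k)))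
        →ₗ[𝕜] ↥(LinearMap.range i)),
      -- j' (i x) = [j x]
      (∀ x : D,
        j' (i.rangeRestrict x) =
          Submodule.Quotient.mk
            (LinearMap.codRestrict (LinearMap.ker (j ∘ₗ k)) j
              (fun x => by
                have h0 : k (j x) = 0 := by
                  rw [← LinearMap.mem_ker, ← hjk]
                  exact LinearMap.mem_range_self j x
                simp [LinearMap.mem_ker, LinearMap.comp_apply, h0]) x)) ∧
      -- k' [y] = k y
      (∀ y : ↥(LinearMap.ker (j ∘ₗ k)),
        k' (Submodule.Quotient.mk y) =
          LinearMap.codRestrict (LinearMap.range i)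
            (k ∘ₗ (LinearMap.ker (j ∘ₗ k)).subtype)
            (fun y => by
              rw [hij, LinearMap.mem_ker]
              exact LinearMap.mem_ker.mp y.2) y) ∧
      -- exactness of the derived couple
      LinearMap.range (i.restrict (p := LinearMap.range i) (q := LinearMap.range i)
          (fun x _ => LinearMap.mem_range_self i x)) = LinearMap.ker j' ∧
      LinearMap.range j' = LinearMap.ker k' ∧
      LinearMap.range k' = LinearMap.ker (i.restrict (p := LinearMap.range i)
          (q := LinearMap.range i) (fun x _ => LinearMap.mem_range_self i x)) := by
  open ExactCouple in
  exact ⟨derivedJ hjk hki, derivedK hij hjk, derivedJ_rangeRestrict hjk hki, derivedK_mk hij hjk,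
    range_derivedI_eq_ker_derivedJ hij hjk hki, range_derivedJ_eq_ker_derivedK hij hjk hki,
    range_derivedK_eq_ker_derivedI hij hjk hki⟩
end
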